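/- arXiv:1308.1827 — 2 statements merged into one kernel-verified Lean document; each statement's English description precedes it below -/
import Mathlib

section
/- Let c(P,L) = Π_{𝐒⊥}(vec(PL) − vec(S_0)) with S_0 = 0, i.e., c(P,L) = Π_{𝐒⊥} vec(PL). Then every stationary point of the function (P,L) ↦ ||c(P,L)||_2^2 is feasible, i.e., if the gradient of ||c(P,L)||_2^2 with respect to (P,L) vanishes, then c(P,L) = 0. -/
open Matrix Kronecker

/-- Column-major vectorization of a matrix. -/
def mvec {m n : ℕ} (X : Matrix (Fin m) (Fin n) ℝ) : Fin n × Fin m → ℝ :=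
  fun q => X q.2 q.1

/-! `c(P, L) = Π (I ⊗ P) vec L` is linear in `L`, so `‖c‖² = cᵀ J_L vec L`, where `J_L = Π (I ⊗ P)`
is the `L`-block of the Jacobian. At a stationary point `J_Lᵀ c = 0`, hence `‖c‖² = 0`. -/

namespace Matrix

variable {m n R : Type*} [Fintype m] [Fintype n]

theorem mulVec_eq_zero_of_vecMul_mulVec_eq_zero [Ring R] [LinearOrder R]
    [IsStrictOrderedRing R] {A : Matrix m n R} {x : n → R} (h : (A *ᵥ x) ᵥ* A = 0) :
    A *ᵥ x = 0 :=
  dotProduct_self_eq_zero.mp <| by rw [dotProduct_mulVec, h, zero_dotProduct]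

end Matrix

theorem stmt9_general {m n r : ℕ}
    (Pi : Matrix (Fin n × Fin m) (Fin n × Fin m) ℝ)
    (P : Matrix (Fin m) (Fin r) ℝ) (L : Matrix (Fin r) (Fin n) ℝ)
    (hstat : (Pi *ᵥ mvec (P * L)) ᵥ*
        (Pi * Matrix.fromCols
          (Lᵀ ⊗ₖ (1 : Matrix (Fin m) (Fin m) ℝ))
          ((1 : Matrix (Fin n) (Fin n) ℝ) ⊗ₖ P)) = 0) :
    Pi *ᵥ mvec (P * L) = 0 := by
  have hlin : Pi *ᵥ mvec (P * L) = (Pi * ((1 : Matrix (Fin n) (Fin n) ℝ) ⊗ₖ P)) *ᵥ vec L := by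
    change Pi *ᵥ vec (P * L) = _
    rw [vec_mul_eq_mulVec, mulVec_mulVec]
  rw [mul_fromCols, vecMul_fromCols, ← Sum.elim_zero_zero, Sum.elim_eq_iff] at hstat
  rw [hlin] at hstat ⊢
  exact mulVec_eq_zero_of_vecMul_mulVec_eq_zero hstat.2

/-- With `S₀ = 0`, the penalty vector is `c(P,L) = Π_{𝐒⊥} vec(PL)` and its
Jacobian is `Π_{𝐒⊥}[Lᵀ ⊗ I_m, I_n ⊗ P]`. Every stationary point of
`‖c(P,L)‖₂²` (i.e., a point where `J_cᵀ c = 0`) is feasible: `c(P,L) = 0`. -/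
theorem stmt9 {m n r np : ℕ}
    (Pi : Matrix (Fin n × Fin m) (Fin n × Fin m) ℝ)
    (hsym : Piᵀ = Pi) (hidem : Pi * Pi = Pi)
    (P : Matrix (Fin m) (Fin r) ℝ) (L : Matrix (Fin r) (Fin n) ℝ)
    (hstat : (Pi *ᵥ mvec (P * L)) ᵥ*
        (Pi * Matrix.fromCols
          (Lᵀ ⊗ₖ (1 : Matrix (Fin m) (Fin m) ℝ))
          ((1 : Matrix (Fin n) (Fin n) ℝ) ⊗ₖ P)) = 0) :
    Pi *ᵥ mvec (P * L) = 0 :=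
  stmt9_general Pi P L hstat
end

section
/- Three monic-degree-n polynomials a, b, c (viewed via their coefficient vectors) have a nontrivial common divisor of degree at least d ≥ 1 if and only if the stacked generalized Sylvester matrix [S_n(a); S_n(b); S_n(c)] has rank at most 2n − d, where S_k(a) is the k×(n+k) banded multiplication (convolution) matrix of a. Equivalently, the rank deficiency of the stacked matrix equals the degree of the greatest common divisor of a, b, c. -/
/-!
Read through coefficient vectors, the row space of `S_k(f)` with `deg f = n` is
`f · K[X]_k`, the space of multiples of `f` of degree `< n + k`. For two nonzero `f, g` and
`deg lcm(f, g) ≤ e`, the multiples of `f` and of `g` of degree `< e` together span the multiples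
of `gcd(f, g)` of degree `< e`: the sum is contained in the latter, and both have dimension
`e - deg gcd(f, g)`, since the intersection consists of the multiples of `lcm(f, g)` and
`deg gcd + deg lcm = deg f + deg g`. Applied twice, the row space of the stacked matrix is the
space of multiples of `gcd(a, b, c)` of degree `< 2n`, of dimension `2n - deg gcd(a, b, c)`.
-/

open Matrix Polynomial

/-- The `k × (nn + k)` banded multiplication (convolution) matrix of a
polynomial of degree `nn`: row `i` contains the coefficients shifted by `i`. -/
noncomputable def SylMul (nn k : ℕ) (a : Polynomial ℝ) :
    Matrix (Fin k) (Fin (nn + k)) ℝ :=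
  fun i j => if (i : ℕ) ≤ (j : ℕ) ∧ (j : ℕ) - (i : ℕ) ≤ nn then
    a.coeff ((j : ℕ) - (i : ℕ)) else 0

open Module Submodule

namespace EuclideanDomain

variable {R : Type*} [EuclideanDomain R] [DecidableEq R] {a b : R}

theorem gcd_ne_zero_of_left (ha : a ≠ 0) : gcd a b ≠ 0 :=
  fun h => ha (EuclideanDomain.gcd_eq_zero_iff.1 h).1

theorem lcm_ne_zero (ha : a ≠ 0) (hb : b ≠ 0) : lcm a b ≠ 0 :=
  fun h => (EuclideanDomain.lcm_eq_zero_iff.1 h).elim ha hb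

end EuclideanDomain

namespace Polynomial

variable {K : Type*} [Field K]

noncomputable def multiplesLT (f : K[X]) (e : ℕ) : Submodule K K[X] :=
  degreeLT K e ⊓ (Ideal.span {f}).restrictScalars K

theorem mem_multiplesLT {f q : K[X]} {e : ℕ} :
    q ∈ multiplesLT f e ↔ q.degree < e ∧ f ∣ q := by
  rw [multiplesLT, mem_inf, mem_degreeLT, restrictScalars_mem, Ideal.mem_span_singleton]

theorem multiplesLT_le_degreeLT (f : K[X]) (e : ℕ) : multiplesLT f e ≤ degreeLT K e :=
  inf_le_left

instance (f : K[X]) (e : ℕ) : FiniteDimensional K (multiplesLT f e) :=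
  Submodule.finiteDimensional_of_le (multiplesLT_le_degreeLT f e)

theorem multiplesLT_le_of_dvd {f g : K[X]} (hgf : g ∣ f) (e : ℕ) :
    multiplesLT f e ≤ multiplesLT g e := fun _ hq =>
  mem_multiplesLT.2 ⟨(mem_multiplesLT.1 hq).1, hgf.trans (mem_multiplesLT.1 hq).2⟩

theorem span_range_X_pow (k : ℕ) :
    span K (Set.range fun i : Fin k => (X ^ (i : ℕ) : K[X])) = degreeLT K k := by
  have h := congrArg (Submodule.map (degreeLT K k).subtype) (degreeLT.basis K k).span_eq
  rw [map_span, Submodule.map_top, range_subtype, ← Set.range_comp] at h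
  simpa [Function.comp_def] using h

theorem map_mulLeft_degreeLT {f : K[X]} (hf : f ≠ 0) (k : ℕ) :
    (degreeLT K k).map (LinearMap.mulLeft K f) = multiplesLT f (f.natDegree + k) := by
  ext q
  simp only [mem_map, mem_degreeLT, LinearMap.mulLeft_apply, mem_multiplesLT]
  constructor
  · rintro ⟨h, hh, rfl⟩
    refine ⟨?_, dvd_mul_right f h⟩
    rw [degree_mul, degree_eq_natDegree hf, Nat.cast_add]
    exact WithBot.add_lt_add_left WithBot.coe_ne_bot hh
  · rintro ⟨hq, h, rfl⟩
    refine ⟨h, ?_, rfl⟩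
    rw [degree_mul, degree_eq_natDegree hf, Nat.cast_add] at hq
    exact (WithBot.add_lt_add_iff_left WithBot.coe_ne_bot).1 hq

theorem finrank_multiplesLT {f : K[X]} (hf : f ≠ 0) {e : ℕ} (he : f.natDegree ≤ e) :
    finrank K (multiplesLT f e) = e - f.natDegree := by
  obtain ⟨k, rfl⟩ := Nat.exists_eq_add_of_le he
  have hinj : Function.Injective ((LinearMap.mulLeft K f).comp (degreeLT K k).subtype) :=
    fun x y hxy => Subtype.ext (mul_left_cancel₀ hf hxy)
  rw [Nat.add_sub_cancel_left, ← map_mulLeft_degreeLT hf, ← range_subtype (degreeLT K k),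
    ← LinearMap.range_comp, LinearMap.finrank_range_of_inj hinj, (degreeLTEquiv K k).finrank_eq,
    finrank_fin_fun]

section Gcd

variable [DecidableEq K[X]]

theorem natDegree_gcd_add_natDegree_lcm {f g : K[X]} (hf : f ≠ 0) (hg : g ≠ 0) :
    (EuclideanDomain.gcd f g).natDegree + (EuclideanDomain.lcm f g).natDegree =
      f.natDegree + g.natDegree := by
  rw [← natDegree_mul (EuclideanDomain.gcd_ne_zero_of_left hf)
      (EuclideanDomain.lcm_ne_zero hf hg),
    ← natDegree_mul hf hg, EuclideanDomain.gcd_mul_lcm]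

theorem multiplesLT_inf (f g : K[X]) (e : ℕ) :
    multiplesLT f e ⊓ multiplesLT g e = multiplesLT (EuclideanDomain.lcm f g) e := by
  ext q
  simp only [mem_inf, mem_multiplesLT, EuclideanDomain.lcm_dvd_iff]
  tauto

theorem multiplesLT_sup {f g : K[X]} (hf : f ≠ 0) (hg : g ≠ 0) {e : ℕ}
    (he : (EuclideanDomain.lcm f g).natDegree ≤ e) :
    multiplesLT f e ⊔ multiplesLT g e = multiplesLT (EuclideanDomain.gcd f g) e := by
  have hlcm := EuclideanDomain.lcm_ne_zero hf hg
  have hdeg := natDegree_gcd_add_natDegree_lcm hf hg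
  have hfl := natDegree_le_of_dvd (EuclideanDomain.dvd_lcm_left f g) hlcm
  have hgl := natDegree_le_of_dvd (EuclideanDomain.dvd_lcm_right f g) hlcm
  refine eq_of_le_of_finrank_le
    (sup_le (multiplesLT_le_of_dvd (EuclideanDomain.gcd_dvd_left f g) e)
      (multiplesLT_le_of_dvd (EuclideanDomain.gcd_dvd_right f g) e)) ?_
  have hdim := finrank_sup_add_finrank_inf_eq (multiplesLT f e) (multiplesLT g e)
  rw [multiplesLT_inf, finrank_multiplesLT hf (by omega), finrank_multiplesLT hg (by omega),
    finrank_multiplesLT hlcm he] at hdim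
  rw [finrank_multiplesLT (EuclideanDomain.gcd_ne_zero_of_left hf) (by omega)]
  omega

end Gcd

variable (K) in
noncomputable def coeffsBelow (N : ℕ) : K[X] →ₗ[K] Fin N → K :=
  LinearMap.pi fun i => lcoeff K i

theorem finrank_map_coeffsBelow {W : Submodule K K[X]} {N : ℕ} (hW : W ≤ degreeLT K N) :
    finrank K (W.map (coeffsBelow K N)) = finrank K W := by
  have hinj : Function.Injective ((coeffsBelow K N).comp W.subtype) := by
    rw [← LinearMap.ker_eq_bot, LinearMap.ker_eq_bot']
    exact fun x hx => Subtype.ext ((degreeLTEquiv_eq_zero_iff_eq_zero (hW x.2)).1 hx)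
  have h := LinearMap.finrank_range_of_inj hinj
  rwa [LinearMap.range_comp, range_subtype] at h

end Polynomial

theorem Matrix.span_range_fromRows {K m₁ m₂ n : Type*} [Field K] (A : Matrix m₁ n K)
    (B : Matrix m₂ n K) :
    span K (Set.range (fromRows A B).row) =
      span K (Set.range A.row) ⊔ span K (Set.range B.row) := by
  rw [← span_union]
  exact congrArg (span K) (Set.Sum.elim_range A.row B.row)

theorem SylMul_row_eq_coeffsBelow {nn k : ℕ} {f : ℝ[X]} (hf : f.natDegree ≤ nn) (i : Fin k) :
    (SylMul nn k f).row i = coeffsBelow ℝ (nn + k) (f * X ^ (i : ℕ)) := by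
  funext j
  simp only [row, SylMul, coeffsBelow, LinearMap.pi_apply, lcoeff_apply, coeff_mul_X_pow']
  by_cases hij : (i : ℕ) ≤ j
  · by_cases hjn : (j : ℕ) - i ≤ nn
    · simp [hij, hjn]
    · simp only [hij, hjn, and_false, if_false, if_true]
      exact (coeff_eq_zero_of_natDegree_lt (by omega)).symm
  · simp [hij]

theorem span_range_SylMul {nn k : ℕ} {f : ℝ[X]} (hf0 : f ≠ 0) (hf : f.natDegree = nn) :
    span ℝ (Set.range (SylMul nn k f).row) =
      (multiplesLT f (nn + k)).map (coeffsBelow ℝ (nn + k)) := by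
  have hrows : Set.range (SylMul nn k f).row = coeffsBelow ℝ (nn + k) ''
      (LinearMap.mulLeft ℝ f '' Set.range fun i : Fin k => X ^ (i : ℕ)) := by
    rw [← Set.range_comp, ← Set.range_comp]
    exact congrArg Set.range (funext (SylMul_row_eq_coeffsBelow hf.le))
  rw [hrows, span_image, span_image, span_range_X_pow, map_mulLeft_degreeLT hf0, hf]

theorem rank_fromRows_SylMul {nn k : ℕ} (hk : nn ≤ k) {a b c : ℝ[X]}
    (ha : a ≠ 0) (hb : b ≠ 0) (hc : c ≠ 0)
    (hna : a.natDegree = nn) (hnb : b.natDegree = nn) (hnc : c.natDegree = nn) :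
    (fromRows (fromRows (SylMul nn k a) (SylMul nn k b)) (SylMul nn k c)).rank =
      nn + k - (EuclideanDomain.gcd a (EuclideanDomain.gcd b c)).natDegree := by
  have hbc := EuclideanDomain.gcd_ne_zero_of_left (b := c) hb
  have habc := EuclideanDomain.gcd_ne_zero_of_left (b := EuclideanDomain.gcd b c) ha
  have hbc_deg := natDegree_le_of_dvd (EuclideanDomain.gcd_dvd_left b c) hb
  have habc_deg :=
    natDegree_le_of_dvd (EuclideanDomain.gcd_dvd_left a (EuclideanDomain.gcd b c)) ha
  have hlcm_bc := natDegree_gcd_add_natDegree_lcm hb hc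
  have hlcm_abc := natDegree_gcd_add_natDegree_lcm ha hbc
  rw [rank_eq_finrank_span_row, span_range_fromRows, span_range_fromRows,
    span_range_SylMul ha hna, span_range_SylMul hb hnb, span_range_SylMul hc hnc,
    ← Submodule.map_sup, ← Submodule.map_sup, sup_assoc, multiplesLT_sup hb hc (by omega),
    multiplesLT_sup ha hbc (by omega),
    finrank_map_coeffsBelow (multiplesLT_le_degreeLT _ _), finrank_multiplesLT habc (by omega)]

theorem stmt19_general {n d : ℕ} (hdn : d ≤ n)
    (a b c : Polynomial ℝ)
    (ha : a.Monic) (hb : b.Monic) (hc : c.Monic)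
    (hna : a.natDegree = n) (hnb : b.natDegree = n) (hnc : c.natDegree = n) :
    ∀ M : Matrix ((Fin n ⊕ Fin n) ⊕ Fin n) (Fin (n + n)) ℝ,
      M = Matrix.fromRows (Matrix.fromRows (SylMul n n a) (SylMul n n b))
            (SylMul n n c) →
      ((∃ g : Polynomial ℝ, d ≤ g.natDegree ∧ g ∣ a ∧ g ∣ b ∧ g ∣ c) ↔
        M.rank ≤ 2 * n - d) ∧
      2 * n - M.rank =
        (EuclideanDomain.gcd a (EuclideanDomain.gcd b c)).natDegree := by
  rintro M rfl
  have hrank := rank_fromRows_SylMul le_rfl ha.ne_zero hb.ne_zero hc.ne_zero hna hnb hnc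
  set G := EuclideanDomain.gcd a (EuclideanDomain.gcd b c)
  have hG0 : G ≠ 0 := EuclideanDomain.gcd_ne_zero_of_left ha.ne_zero
  have hGa : G ∣ a := EuclideanDomain.gcd_dvd_left _ _
  have hGbc : G ∣ EuclideanDomain.gcd b c := EuclideanDomain.gcd_dvd_right _ _
  have hGn : G.natDegree ≤ a.natDegree := natDegree_le_of_dvd hGa ha.ne_zero
  refine ⟨⟨?_, fun _ => ⟨G, by omega, hGa, hGbc.trans (EuclideanDomain.gcd_dvd_left b c),
    hGbc.trans (EuclideanDomain.gcd_dvd_right b c)⟩⟩, by omega⟩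
  rintro ⟨g, hdg, hga, hgb, hgc⟩
  have hgG : g ∣ G := EuclideanDomain.dvd_gcd hga (EuclideanDomain.dvd_gcd hgb hgc)
  have := natDegree_le_of_dvd hgG hG0
  omega

/-- Three monic degree-`n` real polynomials `a, b, c` have a common divisor of
degree at least `d ≥ 1` iff the stacked generalized Sylvester matrix
`[Sₙ(a); Sₙ(b); Sₙ(c)]` has rank at most `2n − d`; moreover its rank
deficiency equals the degree of `gcd(a, b, c)`. -/
theorem stmt19 {n d : ℕ} (hd : 1 ≤ d) (hdn : d ≤ n)
    (a b c : Polynomial ℝ)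
    (ha : a.Monic) (hb : b.Monic) (hc : c.Monic)
    (hna : a.natDegree = n) (hnb : b.natDegree = n) (hnc : c.natDegree = n) :
    ∀ M : Matrix ((Fin n ⊕ Fin n) ⊕ Fin n) (Fin (n + n)) ℝ,
      M = Matrix.fromRows (Matrix.fromRows (SylMul n n a) (SylMul n n b))
            (SylMul n n c) →
      ((∃ g : Polynomial ℝ, d ≤ g.natDegree ∧ g ∣ a ∧ g ∣ b ∧ g ∣ c) ↔
        M.rank ≤ 2 * n - d) ∧
      2 * n - M.rank =
        (EuclideanDomain.gcd a (EuclideanDomain.gcd b c)).natDegree :=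
  stmt19_general hdn a b c ha hb hc hna hnb hnc
end
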